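/- Hyperoctant limit of the feasible region: fix 1/2 < ρ < 1, r > 0, and ε > 0. Then there exists n₀ such that for all n > n₀, the constant vector (λ_lim + ε, …, λ_lim + ε) ∈ ℝ^n, with λ_lim = r·H_b(ρ), satisfies all feasibility inequalities: for every p ∈ {1,…,n}, p·(λ_lim + ε) ≥ r·[H(n) − H(n−p)]. -/

import Mathlib

open Finset Real Filter

/-- `φ t = -(t·log₂ t)`, with the convention `0·log₂ 0 = 0` (Mathlib: `log 0 = 0`). -/
noncomputable def phi (t : ℝ) : ℝ := -(t * Real.logb 2 t)

/-- pmf of a source vector with `k` zeros out of `n`: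
`q ρ n k = (1/2)(ρ^k (1-ρ)^{n-k} + (1-ρ)^k ρ^{n-k})`. -/
noncomputable def q (ρ : ℝ) (n k : ℕ) : ℝ :=
  (1/2) * (ρ^k * (1-ρ)^(n-k) + (1-ρ)^k * ρ^(n-k))

/-- Joint entropy `H(n)` of the `n` correlated source bits (base 2). -/
noncomputable def H (ρ : ℝ) (n : ℕ) : ℝ :=
  ∑ k ∈ Finset.range (n+1), (n.choose k : ℝ) * phi (q ρ n k)

/-- Binary entropy function. -/
noncomputable def Hb (ρ : ℝ) : ℝ := phi ρ + phi (1-ρ)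

/-- Joint entropy `H(b, x^(1),…,x^(n))` of the common bit and the `n` observations. -/
noncomputable def Hjoint (ρ : ℝ) (n : ℕ) : ℝ :=
  ∑ k ∈ Finset.range (n+1), (n.choose k : ℝ) *
    (phi ((1/2) * ρ^k * (1-ρ)^(n-k)) + phi ((1/2) * (1-ρ)^k * ρ^(n-k)))

/-- Conditional entropy `H(b | x^(1),…,x^(n))`, via the chain rule. -/
noncomputable def Hcond (ρ : ℝ) (n : ℕ) : ℝ := Hjoint ρ n - H ρ n

lemma sum_choose_mul (x y : ℝ) (n : ℕ) :
    ∑ k ∈ Finset.range (n+1), (n.choose k : ℝ) * (x^k * y^(n-k)) = (x+y)^n := by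
  rw [add_pow]
  exact Finset.sum_congr rfl fun k _ => by ring

lemma sum_k_choose_mul (x y : ℝ) (n : ℕ) :
    ∑ k ∈ Finset.range (n+1), (k : ℝ) * (n.choose k : ℝ) * (x^k * y^(n-k))
      = n * x * (x+y)^(n-1) := by
  cases n with
  | zero => simp
  | succ m =>
    rw [Finset.sum_range_succ']
    simp only [Nat.cast_zero, zero_mul, add_zero]
    have key : ∀ k, ((k+1 : ℕ) : ℝ) * ((m+1).choose (k+1) : ℝ)
        = (m+1 : ℝ) * (m.choose k : ℝ) := by
      intro k
      have := Nat.add_one_mul_choose_eq m k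
      have h2 : ((m.succ * m.choose k : ℕ) : ℝ) = ((m.succ.choose k.succ * k.succ : ℕ) : ℝ) := by
        rw [this]
      push_cast at h2
      push_cast
      linarith
    have : ∑ k ∈ Finset.range (m+1), ((k:ℝ)+1) * ((m+1).choose (k+1) : ℝ) * (x^(k+1) * y^(m+1-(k+1)))
        = (m+1 : ℝ) * x * ∑ k ∈ Finset.range (m+1), (m.choose k : ℝ) * (x^k * y^(m-k)) := by
      rw [Finset.mul_sum]
      refine Finset.sum_congr rfl fun k hk => ?_
      have hk' := key k
      push_cast at hk'
      have hsub : m + 1 - (k+1) = m - k := by omega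
      rw [hsub, pow_succ]
      calc ((k:ℝ)+1) * ((m+1).choose (k+1) : ℝ) * (x^k * x * y^(m-k))
          = (((k+1 : ℕ):ℝ) * ((m+1).choose (k+1) : ℝ)) * (x^k * x * y^(m-k)) := by push_cast; ring
        _ = ((m+1 : ℝ) * (m.choose k : ℝ)) * (x^k * x * y^(m-k)) := by rw [key k]
        _ = (m+1 : ℝ) * x * ((m.choose k : ℝ) * (x^k * y^(m-k))) := by ring
    push_cast at this ⊢
    rw [this, sum_choose_mul]
lemma sum_nk_choose_mul (x y : ℝ) (n : ℕ) :
    ∑ k ∈ Finset.range (n+1), ((n-k : ℕ) : ℝ) * (n.choose k : ℝ) * (x^k * y^(n-k))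
      = n * y * (x+y)^(n-1) := by
  have hre := Finset.sum_range_reflect
    (fun k => ((n-k : ℕ) : ℝ) * (n.choose k : ℝ) * (x^k * y^(n-k))) (n+1)
  rw [← hre]
  have : ∀ k ∈ Finset.range (n+1),
      ((n - (n+1-1-k) : ℕ) : ℝ) * (n.choose (n+1-1-k) : ℝ) * (x^(n+1-1-k) * y^(n-(n+1-1-k)))
      = (k : ℝ) * (n.choose k : ℝ) * (y^k * x^(n-k)) := by
    intro k hk
    rw [Finset.mem_range] at hk
    have hk' : k ≤ n := by omega
    have h1 : n + 1 - 1 - k = n - k := by omega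
    have h2 : n - (n - k) = k := by omega
    rw [h1, h2, Nat.choose_symm hk']
    ring
  rw [Finset.sum_congr rfl this, sum_k_choose_mul y x n]
  ring
lemma phi_term (ρ : ℝ) (hρ0 : 0 < ρ) (hs : 0 < 1-ρ) (n k : ℕ) :
    phi ((1/2) * ρ^k * (1-ρ)^(n-k))
      = (1/2) * (ρ^k * (1-ρ)^(n-k)) *
        (1 - (k:ℝ) * Real.logb 2 ρ - ((n-k : ℕ):ℝ) * Real.logb 2 (1-ρ)) := by
  have hρk : ρ^k ≠ 0 := (pow_pos hρ0 k).ne'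
  have hsk : (1-ρ)^(n-k) ≠ 0 := (pow_pos hs (n-k)).ne'
  have hhalf : (1/2 : ℝ) ≠ 0 := by norm_num
  unfold phi
  rw [Real.logb_mul (mul_ne_zero hhalf hρk) hsk, Real.logb_mul hhalf hρk,
    Real.logb_pow, Real.logb_pow]
  have : Real.logb 2 (1/2) = -1 := by simp
  rw [this]
  ring

lemma Hjoint_eq (ρ : ℝ) (hρ0 : 0 < ρ) (hρ1 : ρ < 1) (n : ℕ) :
    Hjoint ρ n = 1 + (n : ℝ) * Hb ρ := by
  have hs : 0 < 1 - ρ := by linarith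
  set s := 1 - ρ with hsdef
  set L1 := Real.logb 2 ρ with hL1
  set L2 := Real.logb 2 s with hL2
  have expand : ∀ k ∈ Finset.range (n+1),
      (n.choose k : ℝ) * (phi ((1/2) * ρ^k * s^(n-k)) + phi ((1/2) * s^k * ρ^(n-k)))
      = (1/2) * ((n.choose k : ℝ) * (ρ^k * s^(n-k)) + (n.choose k : ℝ) * (s^k * ρ^(n-k)))
        - (1/2) * L1 * ((k:ℝ) * (n.choose k : ℝ) * (ρ^k * s^(n-k))
            + ((n-k : ℕ):ℝ) * (n.choose k : ℝ) * (s^k * ρ^(n-k)))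
        - (1/2) * L2 * (((n-k : ℕ):ℝ) * (n.choose k : ℝ) * (ρ^k * s^(n-k))
            + (k:ℝ) * (n.choose k : ℝ) * (s^k * ρ^(n-k))) := by
    intro k _
    rw [phi_term ρ hρ0 hs n k]
    have h2 : phi ((1/2) * s^k * ρ^(n-k))
        = (1/2) * (s^k * ρ^(n-k)) * (1 - (k:ℝ) * L2 - ((n-k : ℕ):ℝ) * L1) := by
      have := phi_term s hs (by rw [hsdef]; ring_nf; linarith) n k
      rw [hsdef] at this ⊢
      have hss : 1 - (1 - ρ) = ρ := by ring
      rw [hss] at this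
      rw [this]
    rw [h2]
    ring
  unfold Hjoint
  rw [Finset.sum_congr rfl expand]
  rw [Finset.sum_sub_distrib, Finset.sum_sub_distrib, ← Finset.mul_sum, ← Finset.mul_sum,
    ← Finset.mul_sum, Finset.sum_add_distrib, Finset.sum_add_distrib, Finset.sum_add_distrib]
  have e1 : ∑ k ∈ Finset.range (n+1), (n.choose k : ℝ) * (ρ^k * s^(n-k)) = 1 := by
    rw [sum_choose_mul]; rw [hsdef]; norm_num
  have e2 : ∑ k ∈ Finset.range (n+1), (n.choose k : ℝ) * (s^k * ρ^(n-k)) = 1 := by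
    rw [sum_choose_mul]; rw [hsdef]; norm_num
  have e3 : ∑ k ∈ Finset.range (n+1), (k:ℝ) * (n.choose k : ℝ) * (ρ^k * s^(n-k)) = n * ρ := by
    rw [sum_k_choose_mul]
    have : ρ + s = 1 := by rw [hsdef]; ring
    rw [this, one_pow, mul_one]
  have e4 : ∑ k ∈ Finset.range (n+1), ((n-k:ℕ):ℝ) * (n.choose k : ℝ) * (s^k * ρ^(n-k)) = n * ρ := by
    rw [sum_nk_choose_mul]
    have : s + ρ = 1 := by rw [hsdef]; ring
    rw [this, one_pow, mul_one]
  have e5 : ∑ k ∈ Finset.range (n+1), ((n-k:ℕ):ℝ) * (n.choose k : ℝ) * (ρ^k * s^(n-k)) = n * s := by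
    rw [sum_nk_choose_mul]
    have : ρ + s = 1 := by rw [hsdef]; ring
    rw [this, one_pow, mul_one]
  have e6 : ∑ k ∈ Finset.range (n+1), (k:ℝ) * (n.choose k : ℝ) * (s^k * ρ^(n-k)) = n * s := by
    rw [sum_k_choose_mul]
    have : s + ρ = 1 := by rw [hsdef]; ring
    rw [this, one_pow, mul_one]
  rw [e1, e2, e3, e4, e5, e6]
  unfold Hb phi
  rw [← hL1, ← hsdef, ← hL2]
  ring
lemma log_one_add_le (t : ℝ) (ht : 0 ≤ t) : Real.log (1+t) ≤ 2 * Real.sqrt t := by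
  have h1t : (0:ℝ) < 1 + t := by linarith
  have h1 : Real.log (1+t) = 2 * Real.log (Real.sqrt (1+t)) := by
    rw [Real.log_sqrt (by linarith)]; ring
  have h2 : Real.log (Real.sqrt (1+t)) ≤ Real.sqrt (1+t) - 1 :=
    Real.log_le_sub_one_of_pos (Real.sqrt_pos.mpr h1t)
  have h3 : Real.sqrt (1+t) ≤ 1 + Real.sqrt t := by
    have h4 : (1:ℝ) + t ≤ (1 + Real.sqrt t)^2 := by
      nlinarith [Real.sqrt_nonneg t, Real.sq_sqrt ht]
    calc Real.sqrt (1+t) ≤ Real.sqrt ((1 + Real.sqrt t)^2) := Real.sqrt_le_sqrt h4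
      _ = 1 + Real.sqrt t := Real.sqrt_sq (by positivity)
  linarith

lemma logb_one_add_le (t : ℝ) (ht : 0 ≤ t) : Real.logb 2 (1+t) ≤ 3 * Real.sqrt t := by
  have hlog2 : (2/3 : ℝ) < Real.log 2 := by
    have := Real.log_two_gt_d9; linarith
  have hnum : 0 ≤ Real.log (1+t) := Real.log_nonneg (by linarith)
  rw [Real.logb]
  calc Real.log (1+t) / Real.log 2 ≤ Real.log (1+t) / (2/3) := by
        apply div_le_div_of_nonneg_left hnum (by norm_num) hlog2.le
    _ = (3/2) * Real.log (1+t) := by ring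
    _ ≤ (3/2) * (2 * Real.sqrt t) := by
        have := log_one_add_le t ht; linarith
    _ = 3 * Real.sqrt t := by ring

lemma phi_add_le (a b : ℝ) (ha : 0 < a) (hb : 0 < b) : phi (a+b) ≤ phi a + phi b := by
  unfold phi
  have h1 : Real.logb 2 a ≤ Real.logb 2 (a+b) :=
    Real.logb_le_logb_of_le one_lt_two ha (by linarith)
  have h2 : Real.logb 2 b ≤ Real.logb 2 (a+b) :=
    Real.logb_le_logb_of_le one_lt_two hb (by linarith)
  nlinarith [mul_le_mul_of_nonneg_left h1 ha.le, mul_le_mul_of_nonneg_left h2 hb.le]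

lemma phi_sub_bound (a b : ℝ) (ha : 0 < a) (hb : 0 < b) :
    phi a + phi b - phi (a+b) ≤ 6 * Real.sqrt (a*b) := by
  have hab : (0:ℝ) < a + b := by linarith
  have e : phi a + phi b - phi (a+b)
      = a * Real.logb 2 (1 + b/a) + b * Real.logb 2 (1 + a/b) := by
    have h1 : (1 : ℝ) + b/a = (a+b)/a := by field_simp
    have h2 : (1 : ℝ) + a/b = (a+b)/b := by field_simp; ring
    rw [h1, h2, Real.logb_div hab.ne' ha.ne', Real.logb_div hab.ne' hb.ne']
    unfold phi; ring
  have key1 : a * Real.sqrt (b/a) = Real.sqrt (a*b) := by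
    rw [show a*b = a^2 * (b/a) by field_simp, Real.sqrt_mul (by positivity),
      Real.sqrt_sq ha.le]
  have key2 : b * Real.sqrt (a/b) = Real.sqrt (a*b) := by
    rw [show a*b = b^2 * (a/b) by field_simp, Real.sqrt_mul (by positivity),
      Real.sqrt_sq hb.le]
  have b1 : a * Real.logb 2 (1 + b/a) ≤ 3 * Real.sqrt (a*b) := by
    calc a * Real.logb 2 (1 + b/a) ≤ a * (3 * Real.sqrt (b/a)) := by
          apply mul_le_mul_of_nonneg_left (logb_one_add_le _ (by positivity)) ha.le
      _ = 3 * (a * Real.sqrt (b/a)) := by ring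
      _ = 3 * Real.sqrt (a*b) := by rw [key1]
  have b2 : b * Real.logb 2 (1 + a/b) ≤ 3 * Real.sqrt (a*b) := by
    calc b * Real.logb 2 (1 + a/b) ≤ b * (3 * Real.sqrt (a/b)) := by
          apply mul_le_mul_of_nonneg_left (logb_one_add_le _ (by positivity)) hb.le
      _ = 3 * (b * Real.sqrt (a/b)) := by ring
      _ = 3 * Real.sqrt (a*b) := by rw [key2]
  linarith [e ▸ (by linarith : a * Real.logb 2 (1 + b/a) + b * Real.logb 2 (1 + a/b) ≤ 6 * Real.sqrt (a*b))]
lemma q_eq (ρ : ℝ) (n k : ℕ) :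
    q ρ n k = (1/2) * ρ^k * (1-ρ)^(n-k) + (1/2) * (1-ρ)^k * ρ^(n-k) := by
  unfold q; ring

lemma Hcond_nonneg (ρ : ℝ) (hρ0 : 0 < ρ) (hρ1 : ρ < 1) (n : ℕ) : 0 ≤ Hcond ρ n := by
  have hs : 0 < 1 - ρ := by linarith
  unfold Hcond Hjoint H
  rw [← Finset.sum_sub_distrib]
  apply Finset.sum_nonneg
  intro k _
  rw [← mul_sub]
  apply mul_nonneg (by positivity)
  rw [q_eq]
  have := phi_add_le ((1/2) * ρ^k * (1-ρ)^(n-k)) ((1/2) * (1-ρ)^k * ρ^(n-k))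
    (by positivity) (by positivity)
  linarith

lemma Hcond_le (ρ : ℝ) (hρ0 : 0 < ρ) (hρ1 : ρ < 1) (n : ℕ) :
    Hcond ρ n ≤ 3 * (2 * Real.sqrt (ρ*(1-ρ)))^n := by
  have hs : 0 < 1 - ρ := by linarith
  have hρs : 0 ≤ ρ * (1-ρ) := by positivity
  unfold Hcond Hjoint H
  rw [← Finset.sum_sub_distrib]
  have bound : ∀ k ∈ Finset.range (n+1),
      (n.choose k : ℝ) * (phi ((1/2) * ρ^k * (1-ρ)^(n-k)) + phi ((1/2) * (1-ρ)^k * ρ^(n-k)))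
        - (n.choose k : ℝ) * phi (q ρ n k)
      ≤ (n.choose k : ℝ) * (3 * (Real.sqrt (ρ*(1-ρ)))^n) := by
    intro k hk
    rw [Finset.mem_range] at hk
    have hkn : k ≤ n := by omega
    set a := (1/2) * ρ^k * (1-ρ)^(n-k) with hadef
    set b := (1/2) * (1-ρ)^k * ρ^(n-k) with hbdef
    have ha : 0 < a := by rw [hadef]; positivity
    have hb : 0 < b := by rw [hbdef]; positivity
    have hq : q ρ n k = a + b := q_eq ρ n k
    have habprod : a * b = (1/4) * (ρ*(1-ρ))^n := by
      rw [hadef, hbdef]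
      have h1 : ρ^k * ρ^(n-k) = ρ^n := by
        rw [← pow_add, Nat.add_sub_cancel' hkn]
      have h2 : (1-ρ)^(n-k) * (1-ρ)^k = (1-ρ)^n := by
        rw [← pow_add, Nat.sub_add_cancel hkn]
      calc (1/2) * ρ^k * (1-ρ)^(n-k) * ((1/2) * (1-ρ)^k * ρ^(n-k))
          = (1/4) * ((ρ^k * ρ^(n-k)) * ((1-ρ)^(n-k) * (1-ρ)^k)) := by ring
        _ = (1/4) * (ρ^n * (1-ρ)^n) := by rw [h1, h2]
        _ = (1/4) * (ρ*(1-ρ))^n := by rw [mul_pow]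
    have hsqrt : Real.sqrt (a*b) = (1/2) * (Real.sqrt (ρ*(1-ρ)))^n := by
      have h3 : a * b = ((1/2) * (Real.sqrt (ρ*(1-ρ)))^n)^2 := by
        have hc := Real.sq_sqrt hρs
        set c := Real.sqrt (ρ*(1-ρ)) with hcdef
        rw [habprod, ← hc]; ring
      rw [h3, Real.sqrt_sq (by positivity)]
    have hterm := phi_sub_bound a b ha hb
    calc (n.choose k : ℝ) * (phi a + phi b) - (n.choose k : ℝ) * phi (q ρ n k)
        = (n.choose k : ℝ) * (phi a + phi b - phi (a+b)) := by rw [hq]; ring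
      _ ≤ (n.choose k : ℝ) * (6 * Real.sqrt (a*b)) := by
          apply mul_le_mul_of_nonneg_left (by linarith) (by positivity)
      _ = (n.choose k : ℝ) * (3 * (Real.sqrt (ρ*(1-ρ)))^n) := by rw [hsqrt]; ring
  calc ∑ k ∈ Finset.range (n+1),
        ((n.choose k : ℝ) * (phi ((1/2) * ρ^k * (1-ρ)^(n-k)) + phi ((1/2) * (1-ρ)^k * ρ^(n-k)))
          - (n.choose k : ℝ) * phi (q ρ n k))
      ≤ ∑ k ∈ Finset.range (n+1), (n.choose k : ℝ) * (3 * (Real.sqrt (ρ*(1-ρ)))^n) :=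
        Finset.sum_le_sum bound
    _ = (∑ k ∈ Finset.range (n+1), (n.choose k : ℝ)) * (3 * (Real.sqrt (ρ*(1-ρ)))^n) := by
        rw [Finset.sum_mul]
    _ = (2:ℝ)^n * (3 * (Real.sqrt (ρ*(1-ρ)))^n) := by
        rw [← Nat.cast_sum, Nat.sum_range_choose]; push_cast; ring
    _ = 3 * (2 * Real.sqrt (ρ*(1-ρ)))^n := by rw [mul_pow]; ring
lemma H_eq (ρ : ℝ) (hρ0 : 0 < ρ) (hρ1 : ρ < 1) (n : ℕ) :
    H ρ n = 1 + (n:ℝ) * Hb ρ - Hcond ρ n := by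
  have h := Hjoint_eq ρ hρ0 hρ1 n
  unfold Hcond
  linarith

theorem feasible_region_hyperoctant_limit (ρ r ε : ℝ) (hρ1 : 1/2 < ρ) (hρ2 : ρ < 1)
    (hr : 0 < r) (hε : 0 < ε) :
    ∃ n₀ : ℕ, ∀ n : ℕ, n₀ < n → ∀ p : ℕ, 1 ≤ p → p ≤ n →
      r * (H ρ n - H ρ (n - p)) ≤ (p : ℝ) * (r * Hb ρ + ε) := by
  have hρ0 : 0 < ρ := by linarith
  have hs : 0 < 1 - ρ := by linarith
  set θ := 2 * Real.sqrt (ρ*(1-ρ)) with hθdef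
  have hθ0 : 0 ≤ θ := by positivity
  have hsq : θ^2 = 4*(ρ*(1-ρ)) := by
    rw [hθdef, mul_pow, Real.sq_sqrt (by positivity)]; ring
  have hθ1 : θ < 1 := by nlinarith [hθ0]
  have htend := tendsto_pow_atTop_nhds_zero_of_lt_one hθ0 hθ1
  have hev : ∀ᶠ m in atTop, θ^m < ε/(3*r) :=
    htend.eventually (gt_mem_nhds (by positivity))
  obtain ⟨N, hN⟩ := Filter.eventually_atTop.mp hev
  set M := Nat.ceil (3*r/ε) with hMdef
  refine ⟨N + M, fun n hn p hp1 hp2 => ?_⟩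
  have hHn := H_eq ρ hρ0 hρ2 n
  have hHnp := H_eq ρ hρ0 hρ2 (n-p)
  have hcast : ((n-p : ℕ):ℝ) = (n:ℝ) - (p:ℝ) := by
    rw [Nat.cast_sub hp2]
  have hdiff : H ρ n - H ρ (n-p) = (p:ℝ) * Hb ρ + Hcond ρ (n-p) - Hcond ρ n := by
    rw [hHn, hHnp, hcast]; ring
  have hcnn := Hcond_nonneg ρ hρ0 hρ2 n
  have hcle := Hcond_le ρ hρ0 hρ2 (n-p)
  rw [← hθdef] at hcle
  have hp1' : (1:ℝ) ≤ (p:ℝ) := by exact_mod_cast hp1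
  have key : r * Hcond ρ (n-p) ≤ (p:ℝ) * ε := by
    by_cases hcase : N ≤ n - p
    · have h1 : θ^(n-p) < ε/(3*r) := hN (n-p) hcase
      have h3 : r * Hcond ρ (n-p) ≤ r * (3*θ^(n-p)) :=
        mul_le_mul_of_nonneg_left hcle hr.le
      have h4 : r * (3*θ^(n-p)) < r * (3*(ε/(3*r))) := by
        apply mul_lt_mul_of_pos_left (by linarith) hr
      have h5 : r * (3*(ε/(3*r))) = ε := by field_simp
      nlinarith
    · have hM : M < p := by omega
      have hMr : 3*r ≤ (M:ℝ) * ε := by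
        have h6 := Nat.le_ceil (3*r/ε)
        rw [div_le_iff₀ hε] at h6
        rw [hMdef]
        linarith
      have hθle : θ^(n-p) ≤ 1 := pow_le_one₀ hθ0 hθ1.le
      have h2 : Hcond ρ (n-p) ≤ 3 := by nlinarith
      have hMp : (M:ℝ) ≤ (p:ℝ) := by exact_mod_cast hM.le
      have h7 : r * Hcond ρ (n-p) ≤ 3*r := by nlinarith
      have h8 : (M:ℝ)*ε ≤ (p:ℝ)*ε := mul_le_mul_of_nonneg_right hMp hε.le
      linarith
  have hrc : 0 ≤ r * Hcond ρ n := mul_nonneg hr.le hcnn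
  calc r * (H ρ n - H ρ (n-p))
      = r*(p:ℝ)*Hb ρ + r*Hcond ρ (n-p) - r*Hcond ρ n := by rw [hdiff]; ring
    _ ≤ r*(p:ℝ)*Hb ρ + (p:ℝ)*ε := by linarith
    _ = (p:ℝ)*(r*Hb ρ + ε) := by ring
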